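/- Let R be a finite nonempty set of rays in the plane and suppose x* ∈ ℝ² attains the maximum of the function x ↦ min_{r ∈ R} d∠(x, r), i.e., min_{r ∈ R} d∠(x*, r) ≥ min_{r ∈ R} d∠(x, r) for all x ∈ ℝ². Then x* does not belong to any Voronoi region: x* ∉ rreg(s) for every s ∈ R; equivalently, x* lies on the rotating rays Voronoi diagram RVD(R). -/
import Mathlib


noncomputable section

open Real

abbrev Pt : Type := EuclideanSpace ℝ (Fin 2)

instance : Fact (Module.finrank ℝ Pt = 2) := ⟨finrank_euclideanSpace_fin⟩

noncomputable def stdOrient : Orientation ℝ Pt (Fin 2) :=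
  (EuclideanSpace.basisFun (Fin 2) ℝ).toBasis.orientation

/-- A ray in the plane, given by its apex and its direction vector. -/
structure Ray2 where
  apex : Pt
  dir : Pt

/-- The set of points of a ray. -/
def Ray2.carrier (r : Ray2) : Set Pt := {x | ∃ t : ℝ, 0 ≤ t ∧ x = r.apex + t • r.dir}

/-- The representative in `[0, 2π)` of an angle. -/
noncomputable def angleIco (θ : Real.Angle) : ℝ :=
  if 0 ≤ θ.toReal then θ.toReal else θ.toReal + 2 * π

open Classical in
/-- The counterclockwise angular distance from a point `x` to a ray `r`. -/
noncomputable def adist (x : Pt) (r : Ray2) : ℝ :=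
  if x = r.apex then 0 else angleIco (stdOrient.oangle r.dir (x - r.apex))

/-- The Voronoi region of a ray `r` in a finite set of rays `R`. -/
def rreg (R : Finset Ray2) (r : Ray2) : Set Pt :=
  {x | ∀ s ∈ R, s ≠ r → adist x r < adist x s}

/-- The rotating rays Voronoi diagram. -/
def RVD (R : Finset Ray2) : Set Pt :=
  (Set.univ \ ⋃ r ∈ R, rreg R r) ∪ ⋃ r ∈ R, r.carrier

/-- The point of the plane with the given coordinates. -/
noncomputable def pt (a b : ℝ) : Pt := (WithLp.equiv 2 (Fin 2 → ℝ)).symm ![a, b]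

lemma coe_angleIco (θ : Real.Angle) : ((angleIco θ : ℝ) : Real.Angle) = θ := by
  unfold angleIco
  split
  · exact θ.coe_toReal
  · rw [Real.Angle.coe_add, Real.Angle.coe_two_pi, add_zero, θ.coe_toReal]

lemma angleIco_nonneg (θ : Real.Angle) : 0 ≤ angleIco θ := by
  unfold angleIco; split
  · assumption
  · have := θ.neg_pi_lt_toReal; have := pi_pos; linarith

lemma angleIco_lt_two_pi (θ : Real.Angle) : angleIco θ < 2 * π := by
  unfold angleIco; split
  · have := θ.toReal_le_pi; have := pi_pos; linarith
  · have : ¬ (0 ≤ θ.toReal) := by assumption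
    linarith [lt_of_not_ge this]

lemma angleIco_zero : angleIco (0 : Real.Angle) = 0 := by
  unfold angleIco; rw [Real.Angle.toReal_zero]; simp

lemma angleIco_coe {a : ℝ} (h0 : 0 ≤ a) (h2 : a < 2 * π) : angleIco (a : Real.Angle) = a := by
  have hpi := pi_pos
  by_cases hle : a ≤ π
  · have ht : ((a : Real.Angle)).toReal = a :=
      Real.Angle.toReal_coe_eq_self_iff.2 ⟨by linarith, hle⟩
    unfold angleIco; rw [ht, if_pos h0]
  · have h' : ((a - 2 * π : ℝ) : Real.Angle) = (a : Real.Angle) := by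
      rw [Real.Angle.coe_sub, Real.Angle.coe_two_pi, sub_zero]
    have ht : ((a : Real.Angle)).toReal = a - 2 * π := by
      rw [← h']
      exact Real.Angle.toReal_coe_eq_self_iff.2 ⟨by linarith, by linarith⟩
    unfold angleIco
    rw [ht, if_neg (by linarith)]
    ring

lemma angleIco_eq_zero {θ : Real.Angle} (h : angleIco θ = 0) : θ = 0 := by
  have := coe_angleIco θ
  rw [h] at this
  exact this.symm.trans (by norm_num)

lemma adist_nonneg (x : Pt) (r : Ray2) : 0 ≤ adist x r := by
  unfold adist; split
  · exact le_refl 0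
  · exact angleIco_nonneg _

lemma adist_lt_two_pi (x : Pt) (r : Ray2) : adist x r < 2 * π := by
  unfold adist; split
  · positivity
  · exact angleIco_lt_two_pi _

lemma oangle_eq_arg (r : Ray2) (x : Pt) :
    stdOrient.oangle r.dir (x - r.apex) = (Complex.arg (stdOrient.kahler r.dir (x - r.apex)) : Real.Angle) :=
  rfl

/-- The formula for `adist` away from the zero locus. -/
lemma adist_eq_pi_add_arg (r : Ray2) (x : Pt)
    (hU : (stdOrient.kahler r.dir (x - r.apex)).re < 0 ∨ (stdOrient.kahler r.dir (x - r.apex)).im ≠ 0) :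
    adist x r = π + Complex.arg (-(stdOrient.kahler r.dir (x - r.apex))) := by
  set z : ℂ := stdOrient.kahler r.dir (x - r.apex) with hzdef
  have hz : z ≠ 0 := by
    intro h; rw [h] at hU; simp at hU
  have hx : x ≠ r.apex := by
    intro h
    apply hz
    rw [hzdef, h]
    simp
  have ha : Complex.arg z ≠ 0 := by
    intro h
    rcases Complex.arg_eq_zero_iff.1 h with ⟨h1, h2⟩
    rcases hU with h3 | h3
    · linarith
    · exact h3 h2
  set a := Complex.arg z with hadef
  have haIoc : -π < a ∧ a ≤ π := ⟨Complex.neg_pi_lt_arg z, Complex.arg_le_pi z⟩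
  have hneg : ((Complex.arg (-z) : ℝ) : Real.Angle) = ((a + π : ℝ) : Real.Angle) := by
    rw [Complex.arg_neg_coe_angle hz, Real.Angle.coe_add]
  have hpi := pi_pos
  have hadist : adist x r = angleIco ((a : ℝ) : Real.Angle) := by
    rw [adist, if_neg hx, oangle_eq_arg]
  have htra : ((a : Real.Angle)).toReal = a :=
    Real.Angle.toReal_coe_eq_self_iff.2 ⟨haIoc.1, haIoc.2⟩
  rcases lt_or_gt_of_ne ha with hlt | hgt
  · -- a < 0 : arg (-z) = a + π
    have h1 : Complex.arg (-z) = a + π := by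
      have := Complex.arg_coe_angle_toReal_eq_arg (-z)
      rw [hneg] at this
      rw [← this, Real.Angle.toReal_coe_eq_self_iff.2 ⟨by linarith, by linarith⟩]
    rw [hadist, h1]
    unfold angleIco
    rw [htra, if_neg (by linarith)]
    ring
  · -- a > 0 : arg (-z) = a - π
    have hco : ((a + π : ℝ) : Real.Angle) = ((a - π : ℝ) : Real.Angle) := by
      have : (a + π : ℝ) = (a - π) + 2 * π := by ring
      rw [this, Real.Angle.coe_add, Real.Angle.coe_two_pi, add_zero]
    have h1 : Complex.arg (-z) = a - π := by
      have := Complex.arg_coe_angle_toReal_eq_arg (-z)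
      rw [hneg, hco] at this
      rw [← this, Real.Angle.toReal_coe_eq_self_iff.2 ⟨by linarith, by linarith⟩]
    rw [hadist, h1]
    unfold angleIco
    rw [htra, if_pos (by linarith)]
    ring


lemma adist_continuousAt (r : Ray2) (hd : r.dir ≠ 0) {x0 : Pt} (h : 0 < adist x0 r) :
    ContinuousAt (fun x => adist x r) x0 := by
  set z : Pt → ℂ := fun x => stdOrient.kahler r.dir (x - r.apex) with hz
  have hzc : Continuous z :=
    (stdOrient.kahler r.dir).continuous_of_finiteDimensional.comp
      (continuous_id.sub continuous_const)
  have hx0 : x0 ≠ r.apex := by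
    intro e; rw [adist, if_pos e] at h; exact lt_irrefl 0 h
  have hz0 : z x0 ≠ 0 := stdOrient.kahler_ne_zero hd (sub_ne_zero.mpr hx0)
  have harg : Complex.arg (z x0) ≠ 0 := by
    intro e
    rw [adist, if_neg hx0, oangle_eq_arg, e] at h
    simp only [Real.Angle.coe_zero, angleIco_zero] at h
    exact lt_irrefl 0 h
  have hU0 : (z x0).re < 0 ∨ (z x0).im ≠ 0 := by
    by_contra hc
    push_neg at hc
    exact harg (Complex.arg_eq_zero_iff.2 ⟨hc.1, hc.2⟩)
  have hUopen : IsOpen {w : ℂ | w.re < 0 ∨ w.im ≠ 0} :=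
    (isOpen_lt Complex.continuous_re continuous_const).union
      (isOpen_ne_fun Complex.continuous_im continuous_const)
  have hev : ∀ᶠ x in nhds x0, (z x).re < 0 ∨ (z x).im ≠ 0 :=
    hzc.continuousAt.eventually_mem (hUopen.mem_nhds hU0)
  have hslit : -(z x0) ∈ Complex.slitPlane := by
    rw [Complex.mem_slitPlane_iff]
    rcases hU0 with h1 | h1
    · left; simpa using h1
    · right; simpa using h1
  have hfc : ContinuousAt (fun x => π + Complex.arg (-(z x))) x0 := by
    apply ContinuousAt.add continuousAt_const
    have h2 : ContinuousAt (fun x : Pt => -(z x)) x0 := hzc.continuousAt.neg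
    exact ContinuousAt.comp (g := Complex.arg) (Complex.continuousAt_arg hslit) h2
  apply hfc.congr
  filter_upwards [hev] with x hx
  exact (adist_eq_pi_add_arg r x hx).symm

lemma adist_zero_mem_line (r : Ray2) (hd : r.dir ≠ 0) {x : Pt} (h : adist x r = 0) :
    x ∈ (AffineSubspace.mk' r.apex (ℝ ∙ r.dir) : Set Pt) := by
  by_cases hx : x = r.apex
  · rw [hx]; exact AffineSubspace.self_mem_mk' _ _
  · rw [adist, if_neg hx] at h
    have h0 : stdOrient.oangle r.dir (x - r.apex) = 0 := angleIco_eq_zero h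
    have hsr : SameRay ℝ r.dir (x - r.apex) := stdOrient.oangle_eq_zero_iff_sameRay.1 h0
    rcases hsr.exists_nonneg_left hd with ⟨t, _, htx⟩
    have hmem : x -ᵥ r.apex ∈ (ℝ ∙ r.dir) := by
      rw [vsub_eq_sub]
      exact Submodule.mem_span_singleton.2 ⟨t, htx⟩
    exact AffineSubspace.mem_mk'.2 hmem

lemma line_ne_top (p v : Pt) (hv : v ≠ 0) :
    AffineSubspace.mk' p (ℝ ∙ v) ≠ (⊤ : AffineSubspace ℝ Pt) := by
  intro h
  have hd := congrArg AffineSubspace.direction h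
  rw [AffineSubspace.direction_mk', AffineSubspace.direction_top] at hd
  have h1 : Module.finrank ℝ (ℝ ∙ v : Submodule ℝ Pt) = 1 := finrank_span_singleton hv
  rw [hd, finrank_top] at h1
  have h2 : Module.finrank ℝ Pt = 2 := finrank_euclideanSpace_fin
  omega


/-- a maximizer of the distance to the nearest ray lies on no Voronoi region,
i.e. it lies on the rotating rays Voronoi diagram. -/
theorem stmt10 (R : Finset Ray2) (hR : R.Nonempty) (hdir : ∀ r ∈ R, r.dir ≠ 0)
    (xstar : Pt)
    (hmax : ∀ x : Pt, (R.inf' hR fun r => adist x r) ≤ R.inf' hR fun r => adist xstar r) :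
    (∀ s ∈ R, xstar ∉ rreg R s) ∧ xstar ∈ RVD R := by
  set m := R.inf' hR fun r => adist xstar r with hm
  have hm0 : 0 ≤ m := Finset.le_inf' hR _ fun r _ => adist_nonneg xstar r
  rcases eq_or_lt_of_le hm0 with hm0' | hmpos
  · exfalso
    have hvol : MeasureTheory.volume
        (⋃ r ∈ R, ((AffineSubspace.mk' r.apex (ℝ ∙ r.dir) : AffineSubspace ℝ Pt) : Set Pt)) = 0 := by
      refine (MeasureTheory.measure_biUnion_null_iff R.countable_toSet).2 ?_
      intro r hr
      exact MeasureTheory.Measure.addHaar_affineSubspace _ _ (line_ne_top _ _ (hdir r hr))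
    have hne : (⋃ r ∈ R, ((AffineSubspace.mk' r.apex (ℝ ∙ r.dir) : AffineSubspace ℝ Pt) : Set Pt))
        ≠ Set.univ := by
      intro h
      rw [h] at hvol
      exact isOpen_univ.measure_ne_zero MeasureTheory.volume Set.univ_nonempty hvol
    rcases (Set.ne_univ_iff_exists_notMem _).1 hne with ⟨x, hx⟩
    have hx' : ∀ r ∈ R, adist x r ≠ 0 := by
      intro r hr h0
      exact hx (Set.mem_biUnion hr (adist_zero_mem_line r (hdir r hr) h0))
    have hlt : m < R.inf' hR fun r => adist x r := by
      rw [← hm0', Finset.lt_inf'_iff]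
      intro r hr
      exact lt_of_le_of_ne (adist_nonneg x r) (Ne.symm (hx' r hr))
    exact absurd (hmax x) (not_le.2 hlt)
  · have key : ∀ s ∈ R, xstar ∉ rreg R s := by
      intro s hs hxs
      have hst : ∀ r ∈ R, r ≠ s → adist xstar s < adist xstar r := fun r hr hrs => hxs r hr hrs
      have hms : adist xstar s = m := by
        refine le_antisymm ?_ (Finset.inf'_le _ hs)
        obtain ⟨r0, hr0, hmr0⟩ := Finset.exists_mem_eq_inf' hR fun r => adist xstar r
        by_cases h : r0 = s
        · rw [hm, hmr0, h]
        · rw [hm, hmr0]; exact (hst r0 hr0 h).le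
      have hposall : ∀ r ∈ R, 0 < adist xstar r :=
        fun r hr => lt_of_lt_of_le hmpos (Finset.inf'_le _ hr)
      have hx0 : xstar ≠ s.apex := by
        intro e
        have h' := hposall s hs
        rw [adist, if_pos e] at h'
        exact lt_irrefl 0 h'
      have hv : xstar - s.apex ≠ 0 := sub_ne_zero.mpr hx0
      have hev : ∀ᶠ x in nhds xstar, ∀ r ∈ R, r ≠ s → m < adist x r := by
        rw [Filter.eventually_all_finset]
        intro r hr
        by_cases hrs : r = s
        · exact Filter.Eventually.of_forall fun x hne => absurd hrs hne
        · have h1 : m < adist xstar r := by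
            rw [← hms]; exact hst r hr hrs
          have h2 := (adist_continuousAt r (hdir r hr) (hposall r hr)).eventually
            (eventually_gt_nhds h1)
          exact h2.mono fun x hx _ => hx
      set v : Pt := xstar - s.apex with hvdef
      set g : ℝ → Pt := fun δ =>
        s.apex + (Real.cos δ • v + Real.sin δ • (stdOrient.rightAngleRotation v)) with hg
      have hgc : Continuous g := by
        apply continuous_const.add
        exact (Real.continuous_cos.smul continuous_const).add
          (Real.continuous_sin.smul continuous_const)
      have hg0 : g 0 = xstar := by
        simp [hg, hvdef]
      have hgev : ∀ᶠ δ in nhds (0 : ℝ), ∀ r ∈ R, r ≠ s → m < adist (g δ) r := by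
        have h3 : Filter.Tendsto g (nhds 0) (nhds xstar) := by
          rw [← hg0]; exact hgc.continuousAt
        exact h3.eventually hev
      have hm2 : m < 2 * π := by
        rw [← hms]; exact adist_lt_two_pi xstar s
      have h2 : ∀ᶠ δ in nhdsWithin 0 (Set.Ioi (0 : ℝ)),
          (∀ r ∈ R, r ≠ s → m < adist (g δ) r) ∧ δ < 2 * π - m ∧ 0 < δ := by
        refine ((hgev.filter_mono nhdsWithin_le_nhds).and ?_)
        refine (((eventually_lt_nhds (by linarith)).filter_mono nhdsWithin_le_nhds).and ?_)
        exact eventually_mem_nhdsWithin.mono fun x hx => hx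
      obtain ⟨δ, hδ1, hδ2, hδ3⟩ := h2.exists
      have hrot : g δ - s.apex = stdOrient.rotation (δ : Real.Angle) v := by
        rw [Orientation.rotation_apply, Real.Angle.cos_coe, Real.Angle.sin_coe, hg]
        exact add_sub_cancel_left _ _
      have hgne : g δ ≠ s.apex := by
        intro e
        have h0 : stdOrient.rotation (δ : Real.Angle) v = 0 := by
          rw [← hrot, e, sub_self]
        exact hv ((stdOrient.rotation (δ : Real.Angle)).map_eq_zero_iff.1 h0)
      have hoang : stdOrient.oangle s.dir (g δ - s.apex) = ((m + δ : ℝ) : Real.Angle) := by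
        rw [hrot, stdOrient.oangle_rotation_right (hdir s hs) hv]
        have h0 : angleIco (stdOrient.oangle s.dir v) = m := by
          rw [← hms, adist, if_neg hx0]
        have h1 : ((m : ℝ) : Real.Angle) = stdOrient.oangle s.dir v := by
          rw [← h0]; exact coe_angleIco _
        rw [← h1]
        exact (Real.Angle.coe_add m δ).symm
      have hadist : adist (g δ) s = m + δ := by
        rw [adist, if_neg hgne, hoang, angleIco_coe (by linarith) (by linarith)]
      have hfin : m < R.inf' hR fun r => adist (g δ) r := by
        rw [Finset.lt_inf'_iff]
        intro r hr
        by_cases hrs : r = s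
        · rw [hrs, hadist]; linarith
        · exact hδ1 r hr hrs
      exact absurd (hmax (g δ)) (not_le.2 hfin)
    refine ⟨key, Or.inl ⟨trivial, ?_⟩⟩
    intro h
    rcases Set.mem_iUnion₂.1 h with ⟨r, hr, hx⟩
    exact key r hr hx
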